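/- Let C ≥ 1 and let π^s, π^t : Fin C → ℝ be probability vectors (nonnegative entries summing to 1). Let ε_{t,i}, ε_{s,i} : Fin C → ℝ be nonnegative class-conditional errors bounded by 1, and suppose |ε_{t,i} - ε_{s,i}| ≤ d_i for each i, with d_i ≥ 0. Then |∑_i π^t_i ε_{t,i} - ∑_i π^s_i ε_{s,i}| ≤ ∑_i |π^t_i - π^s_i| + ∑_i min(π^s_i, π^t_i) · d_i. -/

import Mathlib

/-
Per class, write `πᵗ εₜ - πˢ εₛ` as `(πᵗ - πˢ) εₜ + πˢ (εₜ - εₛ)` or as `(πᵗ - πˢ) εₛ + πᵗ (εₜ - εₛ)`,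
whichever puts the smaller weight in front of `εₜ - εₛ`. Since errors lie in `[0, 1]`, the first
summand is at most `|πᵗ - πˢ|` and the second at most `min(πˢ, πᵗ) dᵢ`; summing over classes gives
the bound.
-/

section

variable {α : Type*} [CommRing α] [LinearOrder α] [IsStrictOrderedRing α] {p q a b : α}

lemma abs_mul_sub_mul_le_of_le (hp : 0 ≤ p) (hpq : p ≤ q) (ha : |a| ≤ 1) :
    |q * a - p * b| ≤ (q - p) + p * |a - b| :=
  calc |q * a - p * b| = |(q - p) * a + p * (a - b)| := by ring_nf
    _ ≤ |(q - p) * a| + |p * (a - b)| := abs_add_le _ _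
    _ = (q - p) * |a| + p * |a - b| := by
        rw [abs_mul, abs_mul, abs_of_nonneg (sub_nonneg.2 hpq), abs_of_nonneg hp]
    _ ≤ (q - p) + p * |a - b| :=
        add_le_add_left (mul_le_of_le_one_right (sub_nonneg.2 hpq) ha) _

lemma abs_mul_sub_mul_le (hp : 0 ≤ p) (hq : 0 ≤ q) (ha : |a| ≤ 1) (hb : |b| ≤ 1) :
    |q * a - p * b| ≤ |q - p| + min p q * |a - b| := by
  rcases le_total p q with hpq | hqp
  · rw [min_eq_left hpq, abs_of_nonneg (sub_nonneg.2 hpq)]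
    exact abs_mul_sub_mul_le_of_le hp hpq ha
  · rw [min_eq_right hqp, abs_sub_comm (q * a), abs_sub_comm q, abs_of_nonneg (sub_nonneg.2 hqp),
      abs_sub_comm a]
    exact abs_mul_sub_mul_le_of_le hq hqp hb

end

theorem stmt_0_general (C : ℕ) (ps pt εs εt d : Fin C → ℝ)
    (hps_nonneg : ∀ i, 0 ≤ ps i)
    (hpt_nonneg : ∀ i, 0 ≤ pt i)
    (hεt : ∀ i, 0 ≤ εt i ∧ εt i ≤ 1)
    (hεs : ∀ i, 0 ≤ εs i ∧ εs i ≤ 1)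
    (hdiff : ∀ i, |εt i - εs i| ≤ d i) :
    |(∑ i, pt i * εt i) - ∑ i, ps i * εs i| ≤
      (∑ i, |pt i - ps i|) + ∑ i, min (ps i) (pt i) * d i := by
  have abs_le_one {x : ℝ} (hx : 0 ≤ x ∧ x ≤ 1) : |x| ≤ 1 := (abs_of_nonneg hx.1).trans_le hx.2
  rw [← Finset.sum_sub_distrib, ← Finset.sum_add_distrib]
  refine (Finset.abs_sum_le_sum_abs _ _).trans (Finset.sum_le_sum fun i _ => ?_)
  calc |pt i * εt i - ps i * εs i|
      ≤ |pt i - ps i| + min (ps i) (pt i) * |εt i - εs i| :=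
        abs_mul_sub_mul_le (hps_nonneg i) (hpt_nonneg i) (abs_le_one (hεt i)) (abs_le_one (hεs i))
    _ ≤ |pt i - ps i| + min (ps i) (pt i) * d i := by
        gcongr
        · exact le_min (hps_nonneg i) (hpt_nonneg i)
        · exact hdiff i

theorem stmt_0 (C : ℕ) (hC : 1 ≤ C) (ps pt εs εt d : Fin C → ℝ)
    (hps_nonneg : ∀ i, 0 ≤ ps i) (hps_sum : ∑ i, ps i = 1)
    (hpt_nonneg : ∀ i, 0 ≤ pt i) (hpt_sum : ∑ i, pt i = 1)
    (hεt : ∀ i, 0 ≤ εt i ∧ εt i ≤ 1)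
    (hεs : ∀ i, 0 ≤ εs i ∧ εs i ≤ 1)
    (hd : ∀ i, 0 ≤ d i)
    (hdiff : ∀ i, |εt i - εs i| ≤ d i) :
    |(∑ i, pt i * εt i) - ∑ i, ps i * εs i| ≤
      (∑ i, |pt i - ps i|) + ∑ i, min (ps i) (pt i) * d i :=
  stmt_0_general C ps pt εs εt d hps_nonneg hpt_nonneg hεt hεs hdiff
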